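/- arXiv:2404.00835 — 4 statements merged into one kernel-verified Lean document; each statement's English description precedes it below -/
import Mathlib

section
/- Brioschi formula: Suppose σ_u(u,v) and σ_v(u,v) are linearly independent, so that (EG − F²)(u,v) > 0, and let L = ⟨σ_uu, n⟩, M = ⟨σ_uv, n⟩, N = ⟨σ_vv, n⟩ where n = (σ_u × σ_v)/√(EG − F²) is the standard unit normal, and let K = (LN − M²)/(EG − F²) be the Gaussian curvature. Then K = (det B₁ − det B₂)/(EG − F²)², where B₁ = [[−½E_vv + F_uv − ½G_uu, ½E_u, F_u − ½E_v], [F_v − ½G_u, E, F], [½G_v, F, G]] and B₂ = [[0, ½E_v, ½G_u], [½E_v, E, F], [½G_u, F, G]], all functions being evaluated at (u,v). -/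
noncomputable section

open RealInnerProductSpace

/-- Euclidean 3-space `ℝ³`. -/
abbrev E3 : Type := EuclideanSpace ℝ (Fin 3)

/-- Partial derivative of `f : ℝ² → X` with respect to the first variable `u`. -/
def pdu {X : Type} [NormedAddCommGroup X] [NormedSpace ℝ X]
    (f : ℝ × ℝ → X) (p : ℝ × ℝ) : X :=
  deriv (fun t => f (t, p.2)) p.1

/-- Partial derivative of `f : ℝ² → X` with respect to the second variable `v`. -/
def pdv {X : Type} [NormedAddCommGroup X] [NormedSpace ℝ X]
    (f : ℝ × ℝ → X) (p : ℝ × ℝ) : X :=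
  deriv (fun t => f (p.1, t)) p.2

/-- The coefficient `E = ⟨σ_u, σ_u⟩` of the first fundamental form. -/
def Ef (σ : ℝ × ℝ → E3) (p : ℝ × ℝ) : ℝ := ⟪pdu σ p, pdu σ p⟫

/-- The coefficient `F = ⟨σ_u, σ_v⟩` of the first fundamental form. -/
def Ff (σ : ℝ × ℝ → E3) (p : ℝ × ℝ) : ℝ := ⟪pdu σ p, pdv σ p⟫

/-- The coefficient `G = ⟨σ_v, σ_v⟩` of the first fundamental form. -/
def Gf (σ : ℝ × ℝ → E3) (p : ℝ × ℝ) : ℝ := ⟪pdv σ p, pdv σ p⟫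

/-- The cross product on `ℝ³ = EuclideanSpace ℝ (Fin 3)`. -/
def cross3 (x y : E3) : E3 :=
  (WithLp.equiv 2 (Fin 3 → ℝ)).symm
    (crossProduct (WithLp.equiv 2 (Fin 3 → ℝ) x) (WithLp.equiv 2 (Fin 3 → ℝ) y))

section Aux

variable {X : Type} [NormedAddCommGroup X] [NormedSpace ℝ X]

lemma Brioschi.hasDerivAt_sliceu {f : ℝ × ℝ → X} {p : ℝ × ℝ} (hf : DifferentiableAt ℝ f p) :
    HasDerivAt (fun t => f (t, p.2)) (fderiv ℝ f p (1, 0)) p.1 := by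
  have h : HasDerivAt (fun t : ℝ => (t, p.2)) ((1 : ℝ), (0 : ℝ)) p.1 :=
    (hasDerivAt_id p.1).prodMk (hasDerivAt_const p.1 p.2)
  have h2 := hf.hasFDerivAt
  rw [show p = (p.1, p.2) by simp] at h2
  exact h2.comp_hasDerivAt p.1 h

lemma Brioschi.hasDerivAt_slicev {f : ℝ × ℝ → X} {p : ℝ × ℝ} (hf : DifferentiableAt ℝ f p) :
    HasDerivAt (fun t => f (p.1, t)) (fderiv ℝ f p (0, 1)) p.2 := by
  have h : HasDerivAt (fun t : ℝ => (p.1, t)) ((0 : ℝ), (1 : ℝ)) p.2 :=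
    (hasDerivAt_const p.2 p.1).prodMk (hasDerivAt_id p.2)
  have h2 := hf.hasFDerivAt
  rw [show p = (p.1, p.2) by simp] at h2
  exact h2.comp_hasDerivAt p.2 h

lemma Brioschi.pdu_eq_fderiv {f : ℝ × ℝ → X} {p : ℝ × ℝ} (hf : DifferentiableAt ℝ f p) :
    pdu f p = fderiv ℝ f p (1, 0) := (Brioschi.hasDerivAt_sliceu hf).deriv

lemma Brioschi.pdv_eq_fderiv {f : ℝ × ℝ → X} {p : ℝ × ℝ} (hf : DifferentiableAt ℝ f p) :
    pdv f p = fderiv ℝ f p (0, 1) := (Brioschi.hasDerivAt_slicev hf).deriv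

lemma Brioschi.hasDerivAt_pdu {f : ℝ × ℝ → X} {p : ℝ × ℝ} (hf : DifferentiableAt ℝ f p) :
    HasDerivAt (fun t => f (t, p.2)) (pdu f p) p.1 := by
  rw [Brioschi.pdu_eq_fderiv hf]; exact Brioschi.hasDerivAt_sliceu hf

lemma Brioschi.hasDerivAt_pdv {f : ℝ × ℝ → X} {p : ℝ × ℝ} (hf : DifferentiableAt ℝ f p) :
    HasDerivAt (fun t => f (p.1, t)) (pdv f p) p.2 := by
  rw [Brioschi.pdv_eq_fderiv hf]; exact Brioschi.hasDerivAt_slicev hf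

lemma Brioschi.pdu_contDiffOn {f : ℝ × ℝ → X} {O : Set (ℝ × ℝ)} (hO : IsOpen O)
    (hf : ContDiffOn ℝ (⊤ : ℕ∞) f O) : ContDiffOn ℝ (⊤ : ℕ∞) (pdu f) O := by
  have h1 : ContDiffOn ℝ (⊤ : ℕ∞) (fderiv ℝ f) O := hf.fderiv_of_isOpen hO (by simp)
  have h2 : ContDiffOn ℝ (⊤ : ℕ∞) (fun q => fderiv ℝ f q ((1 : ℝ), (0 : ℝ))) O :=
    (ContinuousLinearMap.apply ℝ X ((1 : ℝ), (0 : ℝ))).contDiff.comp_contDiffOn h1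
  exact h2.congr fun q hq => Brioschi.pdu_eq_fderiv
    ((hf.differentiableOn (by simp)).differentiableAt (hO.mem_nhds hq))

lemma Brioschi.pdv_contDiffOn {f : ℝ × ℝ → X} {O : Set (ℝ × ℝ)} (hO : IsOpen O)
    (hf : ContDiffOn ℝ (⊤ : ℕ∞) f O) : ContDiffOn ℝ (⊤ : ℕ∞) (pdv f) O := by
  have h1 : ContDiffOn ℝ (⊤ : ℕ∞) (fderiv ℝ f) O := hf.fderiv_of_isOpen hO (by simp)
  have h2 : ContDiffOn ℝ (⊤ : ℕ∞) (fun q => fderiv ℝ f q ((0 : ℝ), (1 : ℝ))) O :=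
    (ContinuousLinearMap.apply ℝ X ((0 : ℝ), (1 : ℝ))).contDiff.comp_contDiffOn h1
  exact h2.congr fun q hq => Brioschi.pdv_eq_fderiv
    ((hf.differentiableOn (by simp)).differentiableAt (hO.mem_nhds hq))

lemma Brioschi.pdu_congr {f g : ℝ × ℝ → X} {p : ℝ × ℝ} (h : f =ᶠ[nhds p] g) :
    pdu f p = pdu g p := by
  apply Filter.EventuallyEq.deriv_eq
  have hc : Continuous (fun t : ℝ => (t, p.2)) := by fun_prop
  have ht : Filter.Tendsto (fun t : ℝ => (t, p.2)) (nhds p.1) (nhds p) := by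
    have := hc.tendsto p.1; simpa using this
  exact h.comp_tendsto ht

lemma Brioschi.pdv_congr {f g : ℝ × ℝ → X} {p : ℝ × ℝ} (h : f =ᶠ[nhds p] g) :
    pdv f p = pdv g p := by
  apply Filter.EventuallyEq.deriv_eq
  have hc : Continuous (fun t : ℝ => (p.1, t)) := by fun_prop
  have ht : Filter.Tendsto (fun t : ℝ => (p.1, t)) (nhds p.2) (nhds p) := by
    have := hc.tendsto p.2; simpa using this
  exact h.comp_tendsto ht

lemma Brioschi.schwarz {f : ℝ × ℝ → X} {O : Set (ℝ × ℝ)} (hO : IsOpen O)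
    (hf : ContDiffOn ℝ (⊤ : ℕ∞) f O) {p : ℝ × ℝ} (hp : p ∈ O) :
    pdv (pdu f) p = pdu (pdv f) p := by
  have haf : ContDiffAt ℝ (⊤ : ℕ∞) f p := hf.contDiffAt (hO.mem_nhds hp)
  have hF' : DifferentiableAt ℝ (fderiv ℝ f) p :=
    (haf.fderiv_right (m := 1) (WithTop.coe_le_coe.2 le_top)).differentiableAt one_ne_zero
  have hdiff : ∀ q ∈ O, DifferentiableAt ℝ f q := fun q hq =>
    (hf.differentiableOn (by simp)).differentiableAt (hO.mem_nhds hq)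
  have heu : pdu f =ᶠ[nhds p] fun q => fderiv ℝ f q (1, 0) := by
    filter_upwards [hO.mem_nhds hp] with q hq using Brioschi.pdu_eq_fderiv (hdiff q hq)
  have hev : pdv f =ᶠ[nhds p] fun q => fderiv ℝ f q (0, 1) := by
    filter_upwards [hO.mem_nhds hp] with q hq using Brioschi.pdv_eq_fderiv (hdiff q hq)
  have hdu : DifferentiableAt ℝ (pdu f) p :=
    ((Brioschi.pdu_contDiffOn hO hf).differentiableOn (by simp)).differentiableAt
      (hO.mem_nhds hp)
  have hdv : DifferentiableAt ℝ (pdv f) p :=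
    ((Brioschi.pdv_contDiffOn hO hf).differentiableOn (by simp)).differentiableAt
      (hO.mem_nhds hp)
  have key : ∀ v w : ℝ × ℝ, fderiv ℝ (fun q => fderiv ℝ f q v) p w
      = fderiv ℝ (fderiv ℝ f) p w v := by
    intro v w
    rw [fderiv_clm_apply hF' (differentiableAt_const v)]
    simp
  have hsymm := haf.isSymmSndFDerivAt (by
    rw [minSmoothness_of_isRCLikeNormedField]; exact WithTop.coe_le_coe.2 le_top)
  calc pdv (pdu f) p = fderiv ℝ (pdu f) p (0, 1) := Brioschi.pdv_eq_fderiv hdu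
    _ = fderiv ℝ (fun q => fderiv ℝ f q (1, 0)) p (0, 1) := by rw [heu.fderiv_eq]
    _ = fderiv ℝ (fderiv ℝ f) p (0, 1) (1, 0) := key _ _
    _ = fderiv ℝ (fderiv ℝ f) p (1, 0) (0, 1) := hsymm _ _
    _ = fderiv ℝ (fun q => fderiv ℝ f q (0, 1)) p (1, 0) := (key _ _).symm
    _ = fderiv ℝ (pdv f) p (1, 0) := by rw [hev.fderiv_eq]
    _ = pdu (pdv f) p := (Brioschi.pdu_eq_fderiv hdv).symm

end Aux

section InnerRules

variable {Y : Type} [NormedAddCommGroup Y] [InnerProductSpace ℝ Y]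

lemma Brioschi.pdu_inner {f g : ℝ × ℝ → Y} {p : ℝ × ℝ}
    (hf : DifferentiableAt ℝ f p) (hg : DifferentiableAt ℝ g p) :
    pdu (fun q => ⟪f q, g q⟫) p = ⟪f p, pdu g p⟫ + ⟪pdu f p, g p⟫ := by
  have := ((Brioschi.hasDerivAt_pdu hf).inner ℝ (Brioschi.hasDerivAt_pdu hg)).deriv
  exact this

lemma Brioschi.pdv_inner {f g : ℝ × ℝ → Y} {p : ℝ × ℝ}
    (hf : DifferentiableAt ℝ f p) (hg : DifferentiableAt ℝ g p) :
    pdv (fun q => ⟪f q, g q⟫) p = ⟪f p, pdv g p⟫ + ⟪pdv f p, g p⟫ := by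
  have := ((Brioschi.hasDerivAt_pdv hf).inner ℝ (Brioschi.hasDerivAt_pdv hg)).deriv
  exact this

lemma Brioschi.pdu_inner_add {f₁ g₁ f₂ g₂ : ℝ × ℝ → Y} {p : ℝ × ℝ}
    (h1 : DifferentiableAt ℝ f₁ p) (h2 : DifferentiableAt ℝ g₁ p)
    (h3 : DifferentiableAt ℝ f₂ p) (h4 : DifferentiableAt ℝ g₂ p) :
    pdu (fun q => ⟪f₁ q, g₁ q⟫ + ⟪f₂ q, g₂ q⟫) p
      = (⟪f₁ p, pdu g₁ p⟫ + ⟪pdu f₁ p, g₁ p⟫) + (⟪f₂ p, pdu g₂ p⟫ + ⟪pdu f₂ p, g₂ p⟫) := by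
  have := (((Brioschi.hasDerivAt_pdu h1).inner ℝ (Brioschi.hasDerivAt_pdu h2)).add
    ((Brioschi.hasDerivAt_pdu h3).inner ℝ (Brioschi.hasDerivAt_pdu h4))).deriv
  exact this

lemma Brioschi.pdv_inner_add {f₁ g₁ f₂ g₂ : ℝ × ℝ → Y} {p : ℝ × ℝ}
    (h1 : DifferentiableAt ℝ f₁ p) (h2 : DifferentiableAt ℝ g₁ p)
    (h3 : DifferentiableAt ℝ f₂ p) (h4 : DifferentiableAt ℝ g₂ p) :
    pdv (fun q => ⟪f₁ q, g₁ q⟫ + ⟪f₂ q, g₂ q⟫) p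
      = (⟪f₁ p, pdv g₁ p⟫ + ⟪pdv f₁ p, g₁ p⟫) + (⟪f₂ p, pdv g₂ p⟫ + ⟪pdv f₂ p, g₂ p⟫) := by
  have := (((Brioschi.hasDerivAt_pdv h1).inner ℝ (Brioschi.hasDerivAt_pdv h2)).add
    ((Brioschi.hasDerivAt_pdv h3).inner ℝ (Brioschi.hasDerivAt_pdv h4))).deriv
  exact this

end InnerRules

section Cross

lemma Brioschi.inner_eq (x y : E3) : ⟪x, y⟫ = x 0 * y 0 + x 1 * y 1 + x 2 * y 2 := by
  simp [PiLp.inner_apply, Fin.sum_univ_three]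
  ring

lemma Brioschi.cross3_apply (x y : E3) : cross3 x y 0 = x 1 * y 2 - x 2 * y 1
    ∧ cross3 x y 1 = x 2 * y 0 - x 0 * y 2 ∧ cross3 x y 2 = x 0 * y 1 - x 1 * y 0 := by
  simp [cross3, cross_apply]

lemma Brioschi.triple_mul (x y u v : E3) :
    ⟪x, cross3 u v⟫ * ⟪y, cross3 u v⟫ =
      Matrix.det !![⟪x,y⟫, ⟪x,u⟫, ⟪x,v⟫; ⟪u,y⟫, ⟪u,u⟫, ⟪u,v⟫; ⟪v,y⟫, ⟪v,u⟫, ⟪v,v⟫] := by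
  obtain ⟨h0, h1, h2⟩ := Brioschi.cross3_apply u v
  rw [Matrix.det_fin_three]
  simp only [Brioschi.inner_eq, h0, h1, h2, Matrix.cons_val', Matrix.cons_val_zero,
    Matrix.cons_val_one, Matrix.head_cons, Matrix.empty_val', Matrix.cons_val_fin_one,
    Matrix.head_fin_const, Matrix.cons_val_two, Matrix.tail_cons, Matrix.of_apply]
  ring

lemma Brioschi.cross3_self_inner (u v : E3) :
    ⟪cross3 u v, cross3 u v⟫ = ⟪u,u⟫ * ⟪v,v⟫ - ⟪u,v⟫ ^ 2 := by
  obtain ⟨h0, h1, h2⟩ := Brioschi.cross3_apply u v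
  simp only [Brioschi.inner_eq, h0, h1, h2]; ring

lemma Brioschi.cross3_ne_zero {u v : E3} (h : LinearIndependent ℝ ![u, v]) :
    cross3 u v ≠ 0 := by
  have h2 : LinearIndependent ℝ
      ![(WithLp.equiv 2 (Fin 3 → ℝ)) u, (WithLp.equiv 2 (Fin 3 → ℝ)) v] := by
    have h3 := h.map' (WithLp.linearEquiv 2 ℝ (Fin 3 → ℝ)).toLinearMap
      (LinearEquiv.ker _)
    convert h3 using 1
    · ext i j; fin_cases i <;> rfl
    all_goals rfl
  have hne := crossProduct_ne_zero_iff_linearIndependent.2 h2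
  simp only [cross3, ne_eq]
  intro hc
  apply hne
  have := congrArg (WithLp.equiv 2 (Fin 3 → ℝ)) hc
  simpa using this

end Cross

/-- **The Brioschi formula.** If `σ_u`, `σ_v` are linearly independent at `p ∈ O`, so that
`(EG − F²)(p) > 0`, and `L = ⟨σ_uu, n⟩`, `M = ⟨σ_uv, n⟩`, `N = ⟨σ_vv, n⟩` with
`n = (σ_u × σ_v)/√(EG − F²)`, then the Gaussian curvature `K = (LN − M²)/(EG − F²)`
satisfies `K = (det B₁ − det B₂)/(EG − F²)²` where
`B₁ = [[−½E_vv + F_uv − ½G_uu, ½E_u, F_u − ½E_v], [F_v − ½G_u, E, F], [½G_v, F, G]]` and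
`B₂ = [[0, ½E_v, ½G_u], [½E_v, E, F], [½G_u, F, G]]`. -/
theorem brioschi_formula (O : Set (ℝ × ℝ)) (hO : IsOpen O)
    (σ : ℝ × ℝ → E3) (hσ : ContDiffOn ℝ (⊤ : ℕ∞) σ O)
    (p : ℝ × ℝ) (hp : p ∈ O)
    (hlin : LinearIndependent ℝ ![pdu σ p, pdv σ p]) :
    0 < Ef σ p * Gf σ p - Ff σ p ^ 2 ∧
    (let n : E3 := (Real.sqrt (Ef σ p * Gf σ p - Ff σ p ^ 2))⁻¹ •
       cross3 (pdu σ p) (pdv σ p)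
     let L : ℝ := ⟪pdu (pdu σ) p, n⟫
     let M : ℝ := ⟪pdv (pdu σ) p, n⟫
     let N : ℝ := ⟪pdv (pdv σ) p, n⟫
     let K : ℝ := (L * N - M ^ 2) / (Ef σ p * Gf σ p - Ff σ p ^ 2)
     let B₁ : Matrix (Fin 3) (Fin 3) ℝ :=
       !![-(1 / 2) * pdv (pdv (Ef σ)) p + pdv (pdu (Ff σ)) p - (1 / 2) * pdu (pdu (Gf σ)) p,
            (1 / 2) * pdu (Ef σ) p, pdu (Ff σ) p - (1 / 2) * pdv (Ef σ) p;
          pdv (Ff σ) p - (1 / 2) * pdu (Gf σ) p, Ef σ p, Ff σ p;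
          (1 / 2) * pdv (Gf σ) p, Ff σ p, Gf σ p]
     let B₂ : Matrix (Fin 3) (Fin 3) ℝ :=
       !![(0 : ℝ), (1 / 2) * pdv (Ef σ) p, (1 / 2) * pdu (Gf σ) p;
          (1 / 2) * pdv (Ef σ) p, Ef σ p, Ff σ p;
          (1 / 2) * pdu (Gf σ) p, Ff σ p, Gf σ p]
     K = (B₁.det - B₂.det) / (Ef σ p * Gf σ p - Ff σ p ^ 2) ^ 2) := by

  classical
  have hmem : O ∈ nhds p := hO.mem_nhds hp
  have dOn : ∀ {f : ℝ × ℝ → E3}, ContDiffOn ℝ (⊤ : ℕ∞) f O → ∀ {q : ℝ × ℝ}, q ∈ O →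
      DifferentiableAt ℝ f q := by
    intro f hf q hq
    exact (hf.differentiableOn (by simp)).differentiableAt (hO.mem_nhds hq)
  have ha : ContDiffOn ℝ (⊤ : ℕ∞) (pdu σ) O := Brioschi.pdu_contDiffOn hO hσ
  have hb : ContDiffOn ℝ (⊤ : ℕ∞) (pdv σ) O := Brioschi.pdv_contDiffOn hO hσ
  have hau : ContDiffOn ℝ (⊤ : ℕ∞) (pdu (pdu σ)) O := Brioschi.pdu_contDiffOn hO ha
  have hav : ContDiffOn ℝ (⊤ : ℕ∞) (pdv (pdu σ)) O := Brioschi.pdv_contDiffOn hO ha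
  have hbu : ContDiffOn ℝ (⊤ : ℕ∞) (pdu (pdv σ)) O := Brioschi.pdu_contDiffOn hO hb
  have hbv : ContDiffOn ℝ (⊤ : ℕ∞) (pdv (pdv σ)) O := Brioschi.pdv_contDiffOn hO hb
  -- first derivatives of the fundamental coefficients, on O
  have hEu : ∀ q ∈ O, pdu (Ef σ) q = ⟪pdu σ q, pdu (pdu σ) q⟫ + ⟪pdu (pdu σ) q, pdu σ q⟫ :=
    fun q hq => Brioschi.pdu_inner (dOn ha hq) (dOn ha hq)
  have hEv : ∀ q ∈ O, pdv (Ef σ) q = ⟪pdu σ q, pdv (pdu σ) q⟫ + ⟪pdv (pdu σ) q, pdu σ q⟫ :=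
    fun q hq => Brioschi.pdv_inner (dOn ha hq) (dOn ha hq)
  have hFu : ∀ q ∈ O, pdu (Ff σ) q = ⟪pdu σ q, pdu (pdv σ) q⟫ + ⟪pdu (pdu σ) q, pdv σ q⟫ :=
    fun q hq => Brioschi.pdu_inner (dOn ha hq) (dOn hb hq)
  have hFv : ∀ q ∈ O, pdv (Ff σ) q = ⟪pdu σ q, pdv (pdv σ) q⟫ + ⟪pdv (pdu σ) q, pdv σ q⟫ :=
    fun q hq => Brioschi.pdv_inner (dOn ha hq) (dOn hb hq)
  have hGu : ∀ q ∈ O, pdu (Gf σ) q = ⟪pdv σ q, pdu (pdv σ) q⟫ + ⟪pdu (pdv σ) q, pdv σ q⟫ :=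
    fun q hq => Brioschi.pdu_inner (dOn hb hq) (dOn hb hq)
  have hGv : ∀ q ∈ O, pdv (Gf σ) q = ⟪pdv σ q, pdv (pdv σ) q⟫ + ⟪pdv (pdv σ) q, pdv σ q⟫ :=
    fun q hq => Brioschi.pdv_inner (dOn hb hq) (dOn hb hq)
  -- second derivatives at p
  have hEvv : pdv (pdv (Ef σ)) p =
      (⟪pdu σ p, pdv (pdv (pdu σ)) p⟫ + ⟪pdv (pdu σ) p, pdv (pdu σ) p⟫) +
      (⟪pdv (pdu σ) p, pdv (pdu σ) p⟫ + ⟪pdv (pdv (pdu σ)) p, pdu σ p⟫) := by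
    have he : pdv (Ef σ) =ᶠ[nhds p]
        fun q => ⟪pdu σ q, pdv (pdu σ) q⟫ + ⟪pdv (pdu σ) q, pdu σ q⟫ := by
      filter_upwards [hmem] with q hq using hEv q hq
    rw [Brioschi.pdv_congr he]
    exact Brioschi.pdv_inner_add (dOn ha hp) (dOn hav hp) (dOn hav hp) (dOn ha hp)
  have hGuu : pdu (pdu (Gf σ)) p =
      (⟪pdv σ p, pdu (pdu (pdv σ)) p⟫ + ⟪pdu (pdv σ) p, pdu (pdv σ) p⟫) +
      (⟪pdu (pdv σ) p, pdu (pdv σ) p⟫ + ⟪pdu (pdu (pdv σ)) p, pdv σ p⟫) := by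
    have he : pdu (Gf σ) =ᶠ[nhds p]
        fun q => ⟪pdv σ q, pdu (pdv σ) q⟫ + ⟪pdu (pdv σ) q, pdv σ q⟫ := by
      filter_upwards [hmem] with q hq using hGu q hq
    rw [Brioschi.pdu_congr he]
    exact Brioschi.pdu_inner_add (dOn hb hp) (dOn hbu hp) (dOn hbu hp) (dOn hb hp)
  have hFuv : pdv (pdu (Ff σ)) p =
      (⟪pdu σ p, pdv (pdu (pdv σ)) p⟫ + ⟪pdv (pdu σ) p, pdu (pdv σ) p⟫) +
      (⟪pdu (pdu σ) p, pdv (pdv σ) p⟫ + ⟪pdv (pdu (pdu σ)) p, pdv σ p⟫) := by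
    have he : pdu (Ff σ) =ᶠ[nhds p]
        fun q => ⟪pdu σ q, pdu (pdv σ) q⟫ + ⟪pdu (pdu σ) q, pdv σ q⟫ := by
      filter_upwards [hmem] with q hq using hFu q hq
    rw [Brioschi.pdv_congr he]
    exact Brioschi.pdv_inner_add (dOn ha hp) (dOn hbu hp) (dOn hau hp) (dOn hb hp)
  -- Schwarz symmetry relations
  have hs : ∀ q ∈ O, pdu (pdv σ) q = pdv (pdu σ) q :=
    fun q hq => (Brioschi.schwarz hO hσ hq).symm
  have hsp : pdu (pdv σ) p = pdv (pdu σ) p := hs p hp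
  have hs2 : pdv (pdu (pdv σ)) p = pdv (pdv (pdu σ)) p := by
    apply Brioschi.pdv_congr
    filter_upwards [hmem] with q hq using hs q hq
  have hs3 : pdu (pdu (pdv σ)) p = pdv (pdu (pdu σ)) p := by
    have e1 : pdu (pdu (pdv σ)) p = pdu (pdv (pdu σ)) p := by
      apply Brioschi.pdu_congr
      filter_upwards [hmem] with q hq using hs q hq
    rw [e1]
    exact (Brioschi.schwarz hO ha hp).symm
  -- positivity
  set W : ℝ := Ef σ p * Gf σ p - Ff σ p ^ 2 with hW_def
  have hWc : ⟪cross3 (pdu σ p) (pdv σ p), cross3 (pdu σ p) (pdv σ p)⟫ = W := by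
    rw [Brioschi.cross3_self_inner]; rw [hW_def]; simp [Ef, Ff, Gf]
  have hpos : 0 < W := by
    rw [← hWc]
    have hne : ⟪cross3 (pdu σ p) (pdv σ p), cross3 (pdu σ p) (pdv σ p)⟫ ≠ 0 := fun h =>
      Brioschi.cross3_ne_zero hlin ((inner_self_eq_zero (𝕜 := ℝ)).1 h)
    exact lt_of_le_of_ne real_inner_self_nonneg (Ne.symm hne)
  have hW0 : W ≠ 0 := ne_of_gt hpos
  refine ⟨hpos, ?_⟩
  show (⟪pdu (pdu σ) p, (Real.sqrt W)⁻¹ • cross3 (pdu σ p) (pdv σ p)⟫ *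
        ⟪pdv (pdv σ) p, (Real.sqrt W)⁻¹ • cross3 (pdu σ p) (pdv σ p)⟫ -
        ⟪pdv (pdu σ) p, (Real.sqrt W)⁻¹ • cross3 (pdu σ p) (pdv σ p)⟫ ^ 2) / W =
      (Matrix.det !![-(1 / 2) * pdv (pdv (Ef σ)) p + pdv (pdu (Ff σ)) p -
            (1 / 2) * pdu (pdu (Gf σ)) p,
            (1 / 2) * pdu (Ef σ) p, pdu (Ff σ) p - (1 / 2) * pdv (Ef σ) p;
          pdv (Ff σ) p - (1 / 2) * pdu (Gf σ) p, Ef σ p, Ff σ p;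
          (1 / 2) * pdv (Gf σ) p, Ff σ p, Gf σ p] -
       Matrix.det !![(0 : ℝ), (1 / 2) * pdv (Ef σ) p, (1 / 2) * pdu (Gf σ) p;
          (1 / 2) * pdv (Ef σ) p, Ef σ p, Ff σ p;
          (1 / 2) * pdu (Gf σ) p, Ff σ p, Gf σ p]) / W ^ 2
  rw [real_inner_smul_right, real_inner_smul_right, real_inner_smul_right]
  have hr : ((Real.sqrt W)⁻¹) ^ 2 = W⁻¹ := by
    rw [inv_pow, Real.sq_sqrt hpos.le]
  have hstep : ∀ A' N' M' : ℝ,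
      (Real.sqrt W)⁻¹ * A' * ((Real.sqrt W)⁻¹ * N') - ((Real.sqrt W)⁻¹ * M') ^ 2 =
      W⁻¹ * (A' * N' - M' * M') := by
    intro A' N' M'; rw [← hr]; ring
  rw [hstep]
  rw [Brioschi.triple_mul (pdu (pdu σ) p) (pdv (pdv σ) p) (pdu σ p) (pdv σ p),
      Brioschi.triple_mul (pdv (pdu σ) p) (pdv (pdu σ) p) (pdu σ p) (pdv σ p)]
  rw [hEvv, hFuv, hGuu, hEu p hp, hEv p hp, hFu p hp, hFv p hp, hGu p hp, hGv p hp,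
      hsp, hs2, hs3]
  simp only [Matrix.det_fin_three, Matrix.cons_val', Matrix.cons_val_zero, Matrix.cons_val_one,
    Matrix.head_cons, Matrix.empty_val', Matrix.cons_val_fin_one, Matrix.head_fin_const,
    Matrix.cons_val_two, Matrix.tail_cons, Matrix.of_apply, Ef, Ff, Gf]
  simp only [real_inner_comm (pdu (pdu σ) p) (pdu σ p),
      real_inner_comm (pdv (pdu σ) p) (pdu σ p),
      real_inner_comm (pdv (pdv σ) p) (pdu σ p),
      real_inner_comm (pdv (pdv (pdu σ)) p) (pdu σ p),
      real_inner_comm (pdv σ p) (pdu σ p),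
      real_inner_comm (pdu (pdu σ) p) (pdv σ p),
      real_inner_comm (pdv (pdu σ) p) (pdv σ p),
      real_inner_comm (pdv (pdv σ) p) (pdv σ p),
      real_inner_comm (pdv (pdu (pdu σ)) p) (pdv σ p)]
  field_simp
  ring
end
end

section
/- Let ℒ = [σ_uu | σ_u | σ_v] and 𝒩 = [σ_vv | σ_u | σ_v] be the 3×3 matrices whose columns are the indicated vectors, evaluated at a point (u,v) ∈ O. Then ℒᵀ𝒩 = [[⟨σ_uu, σ_vv⟩, ½E_u, F_u − ½E_v], [F_v − ½G_u, E, F], [½G_v, F, G]]. -/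
noncomputable section

open RealInnerProductSpace

/-- The `3 × 3` matrix `[a | b | c]` with columns `a`, `b`, `c`. -/
def colMat (a b c : E3) : Matrix (Fin 3) (Fin 3) ℝ :=
  Matrix.of fun i j => ![a, b, c] j i

open Matrix

section auxiliary

variable {X : Type} [NormedAddCommGroup X] [NormedSpace ℝ X]

lemma hasDerivAt_curve_u (a b : ℝ) :
    HasDerivAt (fun t : ℝ => ((t, b) : ℝ × ℝ)) (1, 0) a :=
  HasDerivAt.prodMk (hasDerivAt_id a) (hasDerivAt_const a b)

lemma hasDerivAt_curve_v (a b : ℝ) :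
    HasDerivAt (fun t : ℝ => ((a, t) : ℝ × ℝ)) (0, 1) b :=
  HasDerivAt.prodMk (hasDerivAt_const b a) (hasDerivAt_id b)

lemma pdu_of_hasFDerivAt {f : ℝ × ℝ → X} {f' : ℝ × ℝ →L[ℝ] X} {q : ℝ × ℝ}
    (h : HasFDerivAt f f' q) :
    HasDerivAt (fun t => f (t, q.2)) (f' (1, 0)) q.1 := by
  simpa [Function.comp_def] using h.comp_hasDerivAt q.1 (hasDerivAt_curve_u q.1 q.2)

lemma pdv_of_hasFDerivAt {f : ℝ × ℝ → X} {f' : ℝ × ℝ →L[ℝ] X} {q : ℝ × ℝ}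
    (h : HasFDerivAt f f' q) :
    HasDerivAt (fun t => f (q.1, t)) (f' (0, 1)) q.2 := by
  simpa [Function.comp_def] using h.comp_hasDerivAt q.2 (hasDerivAt_curve_v q.1 q.2)

lemma matrix33_ext {a₀₀ a₀₁ a₀₂ a₁₀ a₁₁ a₁₂ a₂₀ a₂₁ a₂₂
    b₀₀ b₀₁ b₀₂ b₁₀ b₁₁ b₁₂ b₂₀ b₂₁ b₂₂ : ℝ}
    (h₀₀ : a₀₀ = b₀₀) (h₀₁ : a₀₁ = b₀₁) (h₀₂ : a₀₂ = b₀₂)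
    (h₁₀ : a₁₀ = b₁₀) (h₁₁ : a₁₁ = b₁₁) (h₁₂ : a₁₂ = b₁₂)
    (h₂₀ : a₂₀ = b₂₀) (h₂₁ : a₂₁ = b₂₁) (h₂₂ : a₂₂ = b₂₂) :
    !![a₀₀, a₀₁, a₀₂; a₁₀, a₁₁, a₁₂; a₂₀, a₂₁, a₂₂] =
      !![b₀₀, b₀₁, b₀₂; b₁₀, b₁₁, b₁₂; b₂₀, b₂₁, b₂₂] := by
  rw [h₀₀, h₀₁, h₀₂, h₁₀, h₁₁, h₁₂, h₂₀, h₂₁, h₂₂]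

lemma colMat_transpose_mul (a b c d e f : E3) :
    (colMat a b c)ᵀ * colMat d e f =
      !![(⟪a, d⟫ : ℝ), ⟪a, e⟫, ⟪a, f⟫; ⟪b, d⟫, ⟪b, e⟫, ⟪b, f⟫; ⟪c, d⟫, ⟪c, e⟫, ⟪c, f⟫] := by
  ext i j
  fin_cases i <;> fin_cases j <;>
    simp [colMat, Matrix.mul_apply, Fin.sum_univ_three, PiLp.inner_apply,
      RCLike.inner_apply, conj_trivial] <;> ring

end auxiliary

/-- With `ℒ = [σ_uu | σ_u | σ_v]` and `𝒩 = [σ_vv | σ_u | σ_v]`, one has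
`ℒᵀ𝒩 = [[⟨σ_uu, σ_vv⟩, ½E_u, F_u − ½E_v], [F_v − ½G_u, E, F], [½G_v, F, G]]`. -/
theorem transpose_mul_eq (O : Set (ℝ × ℝ)) (hO : IsOpen O)
    (σ : ℝ × ℝ → E3) (hσ : ContDiffOn ℝ (⊤ : ℕ∞) σ O)
    (p : ℝ × ℝ) (hp : p ∈ O) :
    (colMat (pdu (pdu σ) p) (pdu σ p) (pdv σ p))ᵀ *
        colMat (pdv (pdv σ) p) (pdu σ p) (pdv σ p) =
      !![(⟪pdu (pdu σ) p, pdv (pdv σ) p⟫ : ℝ), (1 / 2) * pdu (Ef σ) p,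
           pdu (Ff σ) p - (1 / 2) * pdv (Ef σ) p;
         pdv (Ff σ) p - (1 / 2) * pdu (Gf σ) p, Ef σ p, Ff σ p;
         (1 / 2) * pdv (Gf σ) p, Ff σ p, Gf σ p] := by
  have hdiff : DifferentiableOn ℝ σ O := hσ.differentiableOn (by simp)
  have hfd : ∀ q ∈ O, HasFDerivAt σ (fderiv ℝ σ q) q := fun q hq =>
    ((hdiff q hq).differentiableAt (hO.mem_nhds hq)).hasFDerivAt
  have hpdu : ∀ q ∈ O, pdu σ q = fderiv ℝ σ q (1, 0) := fun q hq =>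
    (pdu_of_hasFDerivAt (hfd q hq)).deriv
  have hpdv : ∀ q ∈ O, pdv σ q = fderiv ℝ σ q (0, 1) := fun q hq =>
    (pdv_of_hasFDerivAt (hfd q hq)).deriv
  -- the second derivative at `p`
  have h2 : ContDiffOn ℝ 2 σ O := hσ.of_le (by exact WithTop.coe_le_coe.mpr (le_top : (2 : ℕ∞) ≤ ⊤))
  have h1 : ContDiffOn ℝ 1 (fderiv ℝ σ) O := h2.fderiv_of_isOpen hO (by norm_num)
  set f'' := fderiv ℝ (fderiv ℝ σ) p with hf''
  have hdf : HasFDerivAt (fderiv ℝ σ) f'' p :=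
    (((h1.differentiableOn (by norm_num)) p hp).differentiableAt (hO.mem_nhds hp)).hasFDerivAt
  have happ : ∀ w : ℝ × ℝ, HasFDerivAt (fun q => fderiv ℝ σ q w)
      ((ContinuousLinearMap.apply ℝ E3 w).comp f'') p :=
    fun w => ((ContinuousLinearMap.apply ℝ E3 w).hasFDerivAt).comp p hdf
  -- nearby points on the coordinate lines through `p` stay in `O`
  have hmemu : ∀ᶠ t in nhds p.1, (t, p.2) ∈ O :=
    (Continuous.continuousAt (by continuity)).preimage_mem_nhds
      (by rw [Prod.mk.eta]; exact hO.mem_nhds hp)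
  have hmemv : ∀ᶠ t in nhds p.2, (p.1, t) ∈ O :=
    (Continuous.continuousAt (by continuity)).preimage_mem_nhds
      (by rw [Prod.mk.eta]; exact hO.mem_nhds hp)
  -- derivatives of the partial derivatives along the coordinate lines
  have huu : HasDerivAt (fun t => pdu σ (t, p.2)) (f'' (1, 0) (1, 0)) p.1 := by
    refine HasDerivAt.congr_of_eventuallyEq
      (by simpa using pdu_of_hasFDerivAt (happ (1, 0))) ?_
    filter_upwards [hmemu] with t ht using hpdu _ ht
  have hvu : HasDerivAt (fun t => pdu σ (p.1, t)) (f'' (0, 1) (1, 0)) p.2 := by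
    refine HasDerivAt.congr_of_eventuallyEq
      (by simpa using pdv_of_hasFDerivAt (happ (1, 0))) ?_
    filter_upwards [hmemv] with t ht using hpdu _ ht
  have huv : HasDerivAt (fun t => pdv σ (t, p.2)) (f'' (1, 0) (0, 1)) p.1 := by
    refine HasDerivAt.congr_of_eventuallyEq
      (by simpa using pdu_of_hasFDerivAt (happ (0, 1))) ?_
    filter_upwards [hmemu] with t ht using hpdv _ ht
  have hvv : HasDerivAt (fun t => pdv σ (p.1, t)) (f'' (0, 1) (0, 1)) p.2 := by
    refine HasDerivAt.congr_of_eventuallyEq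
      (by simpa using pdv_of_hasFDerivAt (happ (0, 1))) ?_
    filter_upwards [hmemv] with t ht using hpdv _ ht
  -- symmetry of mixed partial derivatives
  have hsymm : f'' (1, 0) (0, 1) = f'' (0, 1) (1, 0) :=
    ((hσ.contDiffAt (hO.mem_nhds hp)).isSymmSndFDerivAt (by rw [minSmoothness_of_isRCLikeNormedField]; exact WithTop.coe_le_coe.mpr (le_top : (2 : ℕ∞) ≤ ⊤))) (1, 0) (0, 1)
  -- values of the second partial derivatives
  have hσuu : pdu (pdu σ) p = f'' (1, 0) (1, 0) := huu.deriv
  have hσvv : pdv (pdv σ) p = f'' (0, 1) (0, 1) := hvv.deriv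
  -- derivatives of E, F, G
  have hEu : pdu (Ef σ) p =
      ⟪pdu σ p, f'' (1, 0) (1, 0)⟫ + ⟪f'' (1, 0) (1, 0), pdu σ p⟫ :=
    (HasDerivAt.inner ℝ huu huu).deriv
  have hEv : pdv (Ef σ) p =
      ⟪pdu σ p, f'' (0, 1) (1, 0)⟫ + ⟪f'' (0, 1) (1, 0), pdu σ p⟫ :=
    (HasDerivAt.inner ℝ hvu hvu).deriv
  have hFu : pdu (Ff σ) p =
      ⟪pdu σ p, f'' (1, 0) (0, 1)⟫ + ⟪f'' (1, 0) (1, 0), pdv σ p⟫ :=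
    (HasDerivAt.inner ℝ huu huv).deriv
  have hFv : pdv (Ff σ) p =
      ⟪pdu σ p, f'' (0, 1) (0, 1)⟫ + ⟪f'' (0, 1) (1, 0), pdv σ p⟫ :=
    (HasDerivAt.inner ℝ hvu hvv).deriv
  have hGu : pdu (Gf σ) p =
      ⟪pdv σ p, f'' (1, 0) (0, 1)⟫ + ⟪f'' (1, 0) (0, 1), pdv σ p⟫ :=
    (HasDerivAt.inner ℝ huv huv).deriv
  have hGv : pdv (Gf σ) p =
      ⟪pdv σ p, f'' (0, 1) (0, 1)⟫ + ⟪f'' (0, 1) (0, 1), pdv σ p⟫ :=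
    (HasDerivAt.inner ℝ hvv hvv).deriv
  -- the nine scalar identities
  have g01 : (⟪pdu (pdu σ) p, pdu σ p⟫ : ℝ) = (1 / 2) * pdu (Ef σ) p := by
    rw [hσuu, hEu]
    linarith [real_inner_comm (pdu σ p) (f'' (1, 0) (1, 0))]
  have g02 : (⟪pdu (pdu σ) p, pdv σ p⟫ : ℝ) = pdu (Ff σ) p - (1 / 2) * pdv (Ef σ) p := by
    rw [hσuu, hFu, hEv, hsymm]
    linarith [real_inner_comm (pdu σ p) (f'' (0, 1) (1, 0))]
  have g10 : (⟪pdu σ p, pdv (pdv σ) p⟫ : ℝ) = pdv (Ff σ) p - (1 / 2) * pdu (Gf σ) p := by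
    rw [hσvv, hFv, hGu, hsymm]
    linarith [real_inner_comm (pdv σ p) (f'' (0, 1) (1, 0))]
  have g20 : (⟪pdv σ p, pdv (pdv σ) p⟫ : ℝ) = (1 / 2) * pdv (Gf σ) p := by
    rw [hσvv, hGv]
    linarith [real_inner_comm (pdv σ p) (f'' (0, 1) (0, 1))]
  have g21 : (⟪pdv σ p, pdu σ p⟫ : ℝ) = Ff σ p := real_inner_comm _ _
  exact (colMat_transpose_mul _ _ _ _ _ _).trans
    (matrix33_ext rfl g01 g02 g10 rfl rfl g20 g21 rfl)
end
end

section
/- Suppose σ_u and σ_v are linearly independent at (u,v) ∈ O with EG − F² > 0 there, let n = (σ_u × σ_v)/√(EG − F²) (defined on the set where σ_u, σ_v are linearly independent and differentiable there), and let L = ⟨σ_uu, n⟩, M = ⟨σ_uv, n⟩, N = ⟨σ_vv, n⟩. If real numbers a, b, c, d satisfy −n_u = a·σ_u + c·σ_v and −n_v = b·σ_u + d·σ_v at (u,v), then [[L, M], [M, N]] = [[E, F], [F, G]]·[[a, b], [c, d]] as 2×2 matrices, and consequently LN − M² = (EG − F²)(ad − bc), i.e. the Gaussian curvature K = (LN −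 M²)/(EG − F²) equals ad − bc. -/
noncomputable section

open RealInnerProductSpace

lemma inner_cross3_left (x y : E3) : ⟪x, cross3 x y⟫ = 0 := by
  have h := dot_self_cross (WithLp.equiv 2 (Fin 3 → ℝ) x) (WithLp.equiv 2 (Fin 3 → ℝ) y)
  rw [dotProduct] at h
  simpa [cross3, inner, RCLike.inner_apply, mul_comm] using h

lemma inner_cross3_right (x y : E3) : ⟪y, cross3 x y⟫ = 0 := by
  have h := dot_cross_self (WithLp.equiv 2 (Fin 3 → ℝ) x) (WithLp.equiv 2 (Fin 3 → ℝ) y)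
  rw [dotProduct] at h
  simpa [cross3, inner, RCLike.inner_apply, mul_comm] using h

lemma hasDerivAt_slice_u {X : Type} [NormedAddCommGroup X] [NormedSpace ℝ X]
    {f : ℝ × ℝ → X} {q : ℝ × ℝ} (hf : DifferentiableAt ℝ f q) :
    HasDerivAt (fun t => f (t, q.2)) (fderiv ℝ f q (1, 0)) q.1 := by
  have hg : HasDerivAt (fun t : ℝ => (t, q.2)) ((1 : ℝ), (0 : ℝ)) q.1 :=
    (hasDerivAt_id q.1).prodMk (hasDerivAt_const q.1 q.2)
  have := hf.hasFDerivAt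
  rw [show q = (q.1, q.2) from rfl] at this
  exact this.comp_hasDerivAt q.1 hg

lemma hasDerivAt_slice_v {X : Type} [NormedAddCommGroup X] [NormedSpace ℝ X]
    {f : ℝ × ℝ → X} {q : ℝ × ℝ} (hf : DifferentiableAt ℝ f q) :
    HasDerivAt (fun t => f (q.1, t)) (fderiv ℝ f q (0, 1)) q.2 := by
  have hg : HasDerivAt (fun t : ℝ => (q.1, t)) ((0 : ℝ), (1 : ℝ)) q.2 :=
    (hasDerivAt_const q.2 q.1).prodMk (hasDerivAt_id q.2)
  have := hf.hasFDerivAt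
  rw [show q = (q.1, q.2) from rfl] at this
  exact this.comp_hasDerivAt q.2 hg

def crossLM : E3 →ₗ[ℝ] E3 →ₗ[ℝ] E3 where
  toFun x :=
    { toFun := fun y => cross3 x y
      map_add' := by intro y z; simp [cross3, map_add]
      map_smul' := by intro r y; simp [cross3, map_smul] }
  map_add' := by intro x z; ext y; simp [cross3, map_add]
  map_smul' := by intro r x; ext y; simp [cross3, map_smul]

def cross3CLM : E3 →L[ℝ] E3 →L[ℝ] E3 :=
  LinearMap.toContinuousLinearMap
    (((LinearMap.toContinuousLinearMap :
        (E3 →ₗ[ℝ] E3) ≃ₗ[ℝ] (E3 →L[ℝ] E3)).toLinearMap).comp crossLM)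

@[simp] lemma cross3CLM_apply (x y : E3) : cross3CLM x y = cross3 x y := rfl


/-- If `σ_u`, `σ_v` are linearly independent at `p ∈ O` with `EG − F² > 0` there,
`n = (σ_u × σ_v)/√(EG − F²)`, `L = ⟨σ_uu, n⟩`, `M = ⟨σ_uv, n⟩`, `N = ⟨σ_vv, n⟩`, and
`−n_u = a σ_u + c σ_v`, `−n_v = b σ_u + d σ_v`, then
`[[L, M], [M, N]] = [[E, F], [F, G]] · [[a, b], [c, d]]`, hence
`LN − M² = (EG − F²)(ad − bc)` and `K = (LN − M²)/(EG − F²) = ad − bc`. -/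
theorem weingarten_matrix_eq (O : Set (ℝ × ℝ)) (hO : IsOpen O)
    (σ : ℝ × ℝ → E3) (hσ : ContDiffOn ℝ (⊤ : ℕ∞) σ O)
    (p : ℝ × ℝ) (hp : p ∈ O)
    (hlin : LinearIndependent ℝ ![pdu σ p, pdv σ p])
    (hpos : 0 < Ef σ p * Gf σ p - Ff σ p ^ 2)
    (n : ℝ × ℝ → E3)
    (hn : ∀ q, n q = (Real.sqrt (Ef σ q * Gf σ q - Ff σ q ^ 2))⁻¹ •
      cross3 (pdu σ q) (pdv σ q))
    (a b c d : ℝ)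
    (ha : -pdu n p = a • pdu σ p + c • pdv σ p)
    (hb : -pdv n p = b • pdu σ p + d • pdv σ p) :
    (let L : ℝ := ⟪pdu (pdu σ) p, n p⟫
     let M : ℝ := ⟪pdv (pdu σ) p, n p⟫
     let N : ℝ := ⟪pdv (pdv σ) p, n p⟫
     !![L, M; M, N] = !![Ef σ p, Ff σ p; Ff σ p, Gf σ p] * !![a, b; c, d] ∧
     L * N - M ^ 2 = (Ef σ p * Gf σ p - Ff σ p ^ 2) * (a * d - b * c) ∧
     (L * N - M ^ 2) / (Ef σ p * Gf σ p - Ff σ p ^ 2) = a * d - b * c) := by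
  set su : ℝ × ℝ → E3 := fun q => fderiv ℝ σ q (1, 0) with hsu_def
  set sv : ℝ × ℝ → E3 := fun q => fderiv ℝ σ q (0, 1) with hsv_def
  have hdiff : ∀ q ∈ O, DifferentiableAt ℝ σ q := fun q hq =>
    (hσ.contDiffAt (hO.mem_nhds hq)).differentiableAt (by simp)
  have hpduσ : ∀ q ∈ O, pdu σ q = su q := fun q hq =>
    (hasDerivAt_slice_u (hdiff q hq)).deriv
  have hpdvσ : ∀ q ∈ O, pdv σ q = sv q := fun q hq =>
    (hasDerivAt_slice_v (hdiff q hq)).deriv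
  -- smoothness of derivative
  have hfd : ContDiffOn ℝ (⊤ : ℕ∞) (fderiv ℝ σ) O := hσ.fderiv_of_isOpen hO (by simp)
  have hfdA : DifferentiableAt ℝ (fderiv ℝ σ) p :=
    (hfd.contDiffAt (hO.mem_nhds hp)).differentiableAt (by simp)
  have hsuA : DifferentiableAt ℝ su p :=
    ((ContinuousLinearMap.apply ℝ E3 ((1:ℝ), (0:ℝ))).differentiable.differentiableAt).comp p hfdA
  have hsvA : DifferentiableAt ℝ sv p :=
    ((ContinuousLinearMap.apply ℝ E3 ((0:ℝ), (1:ℝ))).differentiable.differentiableAt).comp p hfdA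
  -- second derivative and symmetry
  have hsuF : HasFDerivAt su
      ((ContinuousLinearMap.apply ℝ E3 ((1:ℝ), (0:ℝ))).comp (fderiv ℝ (fderiv ℝ σ) p)) p :=
    ((ContinuousLinearMap.apply ℝ E3 ((1:ℝ), (0:ℝ))).hasFDerivAt).comp p hfdA.hasFDerivAt
  have hsvF : HasFDerivAt sv
      ((ContinuousLinearMap.apply ℝ E3 ((0:ℝ), (1:ℝ))).comp (fderiv ℝ (fderiv ℝ σ) p)) p :=
    ((ContinuousLinearMap.apply ℝ E3 ((0:ℝ), (1:ℝ))).hasFDerivAt).comp p hfdA.hasFDerivAt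
  have hsymm : ∀ v w, fderiv ℝ (fderiv ℝ σ) p v w = fderiv ℝ (fderiv ℝ σ) p w v :=
    second_derivative_symmetric_of_eventually (f := σ) (f' := fderiv ℝ σ)
      (by filter_upwards [hO.mem_nhds hp] with q hq using (hdiff q hq).hasFDerivAt)
      hfdA.hasFDerivAt
  have hfsu : fderiv ℝ su p = (ContinuousLinearMap.apply ℝ E3 ((1:ℝ), (0:ℝ))).comp
      (fderiv ℝ (fderiv ℝ σ) p) := hsuF.fderiv
  have hfsv : fderiv ℝ sv p = (ContinuousLinearMap.apply ℝ E3 ((0:ℝ), (1:ℝ))).comp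
      (fderiv ℝ (fderiv ℝ σ) p) := hsvF.fderiv
  have hmix : fderiv ℝ su p (0, 1) = fderiv ℝ sv p (1, 0) := by
    rw [hfsu, hfsv]
    simpa using hsymm ((0:ℝ), (1:ℝ)) ((1:ℝ), (0:ℝ))
  -- differentiability of n at p
  set W : ℝ × ℝ → ℝ := fun q => ⟪su q, su q⟫ * ⟪sv q, sv q⟫ - ⟪su q, sv q⟫ ^ 2 with hW_def
  have hWp : W p = Ef σ p * Gf σ p - Ff σ p ^ 2 := by
    simp only [hW_def, Ef, Ff, Gf, hpduσ p hp, hpdvσ p hp]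
  have hWA : DifferentiableAt ℝ W p :=
    ((hsuA.inner ℝ hsuA).mul (hsvA.inner ℝ hsvA)).sub ((hsuA.inner ℝ hsvA).pow 2)
  have hWpos : 0 < W p := hWp ▸ hpos
  have hsqrtA : DifferentiableAt ℝ (fun q => (Real.sqrt (W q))⁻¹) p := by
    have h1 : DifferentiableAt ℝ (fun q => Real.sqrt (W q)) p :=
      (((Real.contDiffAt_sqrt (ne_of_gt hWpos)).differentiableAt one_ne_zero)).comp p hWA
    exact h1.inv (by positivity)
  set N0 : ℝ × ℝ → E3 := fun q => (Real.sqrt (W q))⁻¹ • cross3 (su q) (sv q) with hN0_def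
  have hcrossA : DifferentiableAt ℝ (fun q => cross3 (su q) (sv q)) p := by
    have h1 : DifferentiableAt ℝ (fun q => cross3CLM (su q)) p :=
      (cross3CLM.differentiable.differentiableAt).comp p hsuA
    simpa using h1.clm_apply hsvA
  have hN0A : DifferentiableAt ℝ N0 p := hsqrtA.smul hcrossA
  have hnN0 : n =ᶠ[nhds p] N0 := by
    filter_upwards [hO.mem_nhds hp] with q hq
    rw [hn q, hN0_def]
    simp only [Ef, Ff, Gf, hpduσ q hq, hpdvσ q hq]
    rfl
  have hnA : DifferentiableAt ℝ n p := hN0A.congr_of_eventuallyEq hnN0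
  -- orthogonality
  have hperpU : ∀ q, ⟪pdu σ q, n q⟫ = (0:ℝ) := by
    intro q
    rw [hn q, real_inner_smul_right, inner_cross3_left, mul_zero]
  have hperpV : ∀ q, ⟪pdv σ q, n q⟫ = (0:ℝ) := by
    intro q
    rw [hn q, real_inner_smul_right, inner_cross3_right, mul_zero]
  -- eventual membership of slices in O
  have hcontu : Continuous (fun t : ℝ => (t, p.2)) := continuous_id.prodMk continuous_const
  have hcontv : Continuous (fun t : ℝ => (p.1, t)) := continuous_const.prodMk continuous_id
  have hOu : ∀ᶠ t in nhds p.1, (t, p.2) ∈ O :=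
    (hO.preimage hcontu).mem_nhds (by simpa using hp)
  have hOv : ∀ᶠ t in nhds p.2, (p.1, t) ∈ O :=
    (hO.preimage hcontv).mem_nhds (by simpa using hp)
  -- derivatives of n along slices
  have hnu : HasDerivAt (fun t => n (t, p.2)) (fderiv ℝ n p (1, 0)) p.1 := hasDerivAt_slice_u hnA
  have hnv : HasDerivAt (fun t => n (p.1, t)) (fderiv ℝ n p (0, 1)) p.2 := hasDerivAt_slice_v hnA
  have hpdun : pdu n p = fderiv ℝ n p (1, 0) := hnu.deriv
  have hpdvn : pdv n p = fderiv ℝ n p (0, 1) := hnv.deriv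
  -- second partials of σ expressed via su, sv
  have hpduu : pdu (pdu σ) p = fderiv ℝ su p (1, 0) := by
    have hev : (fun t => pdu σ (t, p.2)) =ᶠ[nhds p.1] fun t => su (t, p.2) := by
      filter_upwards [hOu] with t ht using hpduσ _ ht
    rw [pdu, hev.deriv_eq, (hasDerivAt_slice_u hsuA).deriv]
  have hpduv : pdv (pdu σ) p = fderiv ℝ su p (0, 1) := by
    have hev : (fun t => pdu σ (p.1, t)) =ᶠ[nhds p.2] fun t => su (p.1, t) := by
      filter_upwards [hOv] with t ht using hpduσ _ ht
    rw [pdv, hev.deriv_eq, (hasDerivAt_slice_v hsuA).deriv]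
  have hpdvu : pdu (pdv σ) p = fderiv ℝ sv p (1, 0) := by
    have hev : (fun t => pdv σ (t, p.2)) =ᶠ[nhds p.1] fun t => sv (t, p.2) := by
      filter_upwards [hOu] with t ht using hpdvσ _ ht
    rw [pdu, hev.deriv_eq, (hasDerivAt_slice_u hsvA).deriv]
  have hpdvv : pdv (pdv σ) p = fderiv ℝ sv p (0, 1) := by
    have hev : (fun t => pdv σ (p.1, t)) =ᶠ[nhds p.2] fun t => sv (p.1, t) := by
      filter_upwards [hOv] with t ht using hpdvσ _ ht
    rw [pdv, hev.deriv_eq, (hasDerivAt_slice_v hsvA).deriv]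
  -- generic product rule identity
  have key : ∀ (X : ℝ × ℝ → E3), DifferentiableAt ℝ X p →
      (∀ᶠ q in nhds p, ⟪X q, n q⟫ = (0:ℝ)) →
      (⟪X p, fderiv ℝ n p (1, 0)⟫ + ⟪fderiv ℝ X p (1, 0), n p⟫ = 0 ∧
       ⟪X p, fderiv ℝ n p (0, 1)⟫ + ⟪fderiv ℝ X p (0, 1), n p⟫ = 0) := by
    intro X hXA hXn
    constructor
    · have h1 : HasDerivAt (fun t => ⟪X (t, p.2), n (t, p.2)⟫)
          (⟪X p, fderiv ℝ n p (1, 0)⟫ + ⟪fderiv ℝ X p (1, 0), n p⟫) p.1 := by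
        have := (hasDerivAt_slice_u hXA).inner ℝ hnu
        simpa using this
      have h2 : HasDerivAt (fun t => ⟪X (t, p.2), n (t, p.2)⟫) 0 p.1 := by
        apply (hasDerivAt_const p.1 (0:ℝ)).congr_of_eventuallyEq
        have := hcontu.continuousAt (x := p.1)
        filter_upwards [this.preimage_mem_nhds (by exact hXn)] with t ht using ht
      exact h1.unique h2
    · have h1 : HasDerivAt (fun t => ⟪X (p.1, t), n (p.1, t)⟫)
          (⟪X p, fderiv ℝ n p (0, 1)⟫ + ⟪fderiv ℝ X p (0, 1), n p⟫) p.2 := by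
        have := (hasDerivAt_slice_v hXA).inner ℝ hnv
        simpa using this
      have h2 : HasDerivAt (fun t => ⟪X (p.1, t), n (p.1, t)⟫) 0 p.2 := by
        apply (hasDerivAt_const p.2 (0:ℝ)).congr_of_eventuallyEq
        have := hcontv.continuousAt (x := p.2)
        filter_upwards [this.preimage_mem_nhds (by exact hXn)] with t ht using ht
      exact h1.unique h2
  have huev : ∀ᶠ q in nhds p, ⟪su q, n q⟫ = (0:ℝ) := by
    filter_upwards [hO.mem_nhds hp] with q hq
    rw [← hpduσ q hq]; exact hperpU q
  have hvev : ∀ᶠ q in nhds p, ⟪sv q, n q⟫ = (0:ℝ) := by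
    filter_upwards [hO.mem_nhds hp] with q hq
    rw [← hpdvσ q hq]; exact hperpV q
  obtain ⟨hKu1, hKu2⟩ := key su hsuA huev
  obtain ⟨hKv1, hKv2⟩ := key sv hsvA hvev
  -- rewrite ha, hb
  rw [hpdun, hpduσ p hp, hpdvσ p hp] at ha
  rw [hpdvn, hpduσ p hp, hpdvσ p hp] at hb
  -- entries
  have hL : ⟪pdu (pdu σ) p, n p⟫ = a * Ef σ p + c * Ff σ p := by
    rw [hpduu]
    have : ⟪fderiv ℝ su p (1, 0), n p⟫ = ⟪su p, -fderiv ℝ n p (1, 0)⟫ := by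
      rw [inner_neg_right]; linarith [hKu1]
    rw [this, ha, inner_add_right, real_inner_smul_right, real_inner_smul_right]
    simp only [Ef, Ff, hpduσ p hp, hpdvσ p hp]
  have hM1 : ⟪pdv (pdu σ) p, n p⟫ = b * Ef σ p + d * Ff σ p := by
    rw [hpduv]
    have : ⟪fderiv ℝ su p (0, 1), n p⟫ = ⟪su p, -fderiv ℝ n p (0, 1)⟫ := by
      rw [inner_neg_right]; linarith [hKu2]
    rw [this, hb, inner_add_right, real_inner_smul_right, real_inner_smul_right]
    simp only [Ef, Ff, hpduσ p hp, hpdvσ p hp]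
  have hM2 : ⟪pdv (pdu σ) p, n p⟫ = a * Ff σ p + c * Gf σ p := by
    rw [hpduv, hmix]
    have : ⟪fderiv ℝ sv p (1, 0), n p⟫ = ⟪sv p, -fderiv ℝ n p (1, 0)⟫ := by
      rw [inner_neg_right]; linarith [hKv1]
    rw [this, ha, inner_add_right, real_inner_smul_right, real_inner_smul_right]
    simp only [Ff, Gf, hpduσ p hp, hpdvσ p hp]
    rw [real_inner_comm (sv p) (su p)]
  have hN : ⟪pdv (pdv σ) p, n p⟫ = b * Ff σ p + d * Gf σ p := by
    rw [hpdvv]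
    have : ⟪fderiv ℝ sv p (0, 1), n p⟫ = ⟪sv p, -fderiv ℝ n p (0, 1)⟫ := by
      rw [inner_neg_right]; linarith [hKv2]
    rw [this, hb, inner_add_right, real_inner_smul_right, real_inner_smul_right]
    simp only [Ff, Gf, hpduσ p hp, hpdvσ p hp]
    rw [real_inner_comm (sv p) (su p)]
  refine ⟨?_, ?_, ?_⟩
  · rw [Matrix.mul_fin_two]
    ext i j
    fin_cases i <;> fin_cases j <;>
      simp [hL, hM1, hM2, hN] <;> linarith [hM1.symm.trans hM2]
  · have hsq : ⟪pdv (pdu σ) p, n p⟫ ^ 2 =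
        (b * Ef σ p + d * Ff σ p) * (a * Ff σ p + c * Gf σ p) := by
      rw [pow_two]; nth_rw 1 [hM1]; rw [hM2]
    rw [hL, hN, hsq]; ring
  · have hsq : ⟪pdv (pdu σ) p, n p⟫ ^ 2 =
        (b * Ef σ p + d * Ff σ p) * (a * Ff σ p + c * Gf σ p) := by
      rw [pow_two]; nth_rw 1 [hM1]; rw [hM2]
    rw [hL, hN, hsq]
    field_simp
    ring
end
end

section
/- Suppose at a point (u,v) ∈ O there are a vector n ∈ ℝ³ with ⟨σ_u, n⟩ = ⟨σ_v, n⟩ = 0 and real numbers Γ¹₁₁, Γ²₁₁, Γ¹₁₂, Γ²₁₂, Γ¹₂₂, Γ²₂₂, L, M, N such that σ_uu = Γ¹₁₁·σ_u + Γ²₁₁·σ_v + L·n, σ_uv = Γ¹₁₂·σ_u + Γ²₁₂·σ_v + M·n, and σ_vv = Γ¹₂₂·σ_u + Γ²₂₂·σ_v + N·n. Then the matrix identity [[E, F], [F, G]]·[[Γ¹₁₁, Γ¹₁₂, Γ¹₂₂], [Γ²₁₁, Γ²₁₂, Γ²₂₂]] = [[½E_u, ½E_v, F_v − ½G_u], [F_u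 − ½E_v, ½G_u, ½G_v]] holds at (u,v). -/
noncomputable section

open RealInnerProductSpace

private lemma slice_u {X : Type*} [NormedAddCommGroup X] [NormedSpace ℝ X]
    {f : ℝ × ℝ → X} {f' : ℝ × ℝ →L[ℝ] X} {q : ℝ × ℝ} (h : HasFDerivAt f f' q) :
    HasDerivAt (fun t => f (t, q.2)) (f' (1, 0)) q.1 := by
  have h1 : HasDerivAt (fun t : ℝ => (t, q.2)) ((1 : ℝ), (0 : ℝ)) q.1 :=
    (hasDerivAt_id q.1).prodMk (hasDerivAt_const q.1 q.2)
  have h2 : HasFDerivAt f f' (q.1, q.2) := by simpa using h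
  exact h2.comp_hasDerivAt q.1 h1

private lemma slice_v {X : Type*} [NormedAddCommGroup X] [NormedSpace ℝ X]
    {f : ℝ × ℝ → X} {f' : ℝ × ℝ →L[ℝ] X} {q : ℝ × ℝ} (h : HasFDerivAt f f' q) :
    HasDerivAt (fun t => f (q.1, t)) (f' (0, 1)) q.2 := by
  have h1 : HasDerivAt (fun t : ℝ => (q.1, t)) ((0 : ℝ), (1 : ℝ)) q.2 :=
    (hasDerivAt_const q.2 q.1).prodMk (hasDerivAt_id q.2)
  have h2 : HasFDerivAt f f' (q.1, q.2) := by simpa using h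
  exact h2.comp_hasDerivAt q.2 h1

set_option maxHeartbeats 1000000 in
/-- If at `p ∈ O` the second derivatives decompose as
`σ_uu = Γ¹₁₁ σ_u + Γ²₁₁ σ_v + L n`, `σ_uv = Γ¹₁₂ σ_u + Γ²₁₂ σ_v + M n`,
`σ_vv = Γ¹₂₂ σ_u + Γ²₂₂ σ_v + N n`, where `n ⟂ σ_u, σ_v`, then
`[[E, F], [F, G]] · [[Γ¹₁₁, Γ¹₁₂, Γ¹₂₂], [Γ²₁₁, Γ²₁₂, Γ²₂₂]]
  = [[½E_u, ½E_v, F_v − ½G_u], [F_u − ½E_v, ½G_u, ½G_v]]`. -/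
theorem christoffel_matrix_eq (O : Set (ℝ × ℝ)) (hO : IsOpen O)
    (σ : ℝ × ℝ → E3) (hσ : ContDiffOn ℝ (⊤ : ℕ∞) σ O)
    (p : ℝ × ℝ) (hp : p ∈ O)
    (n : E3) (hnu : ⟪pdu σ p, n⟫ = (0 : ℝ)) (hnv : ⟪pdv σ p, n⟫ = (0 : ℝ))
    (Γ111 Γ211 Γ112 Γ212 Γ122 Γ222 L M N : ℝ)
    (huu : pdu (pdu σ) p = Γ111 • pdu σ p + Γ211 • pdv σ p + L • n)
    (huv : pdv (pdu σ) p = Γ112 • pdu σ p + Γ212 • pdv σ p + M • n)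
    (hvv : pdv (pdv σ) p = Γ122 • pdu σ p + Γ222 • pdv σ p + N • n) :
    !![Ef σ p, Ff σ p; Ff σ p, Gf σ p] * !![Γ111, Γ112, Γ122; Γ211, Γ212, Γ222] =
      !![(1 / 2) * pdu (Ef σ) p, (1 / 2) * pdv (Ef σ) p,
           pdv (Ff σ) p - (1 / 2) * pdu (Gf σ) p;
         pdu (Ff σ) p - (1 / 2) * pdv (Ef σ) p, (1 / 2) * pdu (Gf σ) p,
           (1 / 2) * pdv (Gf σ) p] := by
  have cd : ContDiffAt ℝ (⊤ : ℕ∞) σ p := hσ.contDiffAt (hO.mem_nhds hp)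
  have cd' : ContDiffAt ℝ 1 (fderiv ℝ σ) p := cd.fderiv_right (by rw [← WithTop.coe_one, ← WithTop.coe_add]; exact WithTop.coe_le_coe.mpr le_top)
  have hd' : DifferentiableAt ℝ (fderiv ℝ σ) p := cd'.differentiableAt one_ne_zero
  have hsymm := cd.isSymmSndFDerivAt (by rw [minSmoothness_of_isRCLikeNormedField]; rw [← WithTop.coe_ofNat]; exact WithTop.coe_le_coe.mpr le_top)
  have hdiff : ∀ᶠ q in nhds p, DifferentiableAt ℝ σ q := by
    filter_upwards [hO.mem_nhds hp] with q hq
    exact (hσ.differentiableOn (by simp)).differentiableAt (hO.mem_nhds hq)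
  have hpu : ∀ᶠ q in nhds p, pdu σ q = fderiv ℝ σ q (1, 0) := by
    filter_upwards [hdiff] with q hq
    exact (slice_u hq.hasFDerivAt).deriv
  have hpv : ∀ᶠ q in nhds p, pdv σ q = fderiv ℝ σ q (0, 1) := by
    filter_upwards [hdiff] with q hq
    exact (slice_v hq.hasFDerivAt).deriv
  have hpup : fderiv ℝ σ p (1, 0) = pdu σ p := hpu.self_of_nhds.symm
  have hpvp : fderiv ℝ σ p (0, 1) = pdv σ p := hpv.self_of_nhds.symm
  have hG : ∀ w : ℝ × ℝ, HasFDerivAt (fun q => fderiv ℝ σ q w)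
      ((ContinuousLinearMap.apply ℝ E3 w).comp (fderiv ℝ (fderiv ℝ σ) p)) p :=
    fun w => (ContinuousLinearMap.apply ℝ E3 w).hasFDerivAt.comp p hd'.hasFDerivAt
  have keyu : Filter.Tendsto (fun t : ℝ => (t, p.2)) (nhds p.1) (nhds p) := by
    have h : Continuous (fun t : ℝ => (t, p.2)) := continuous_id.prodMk continuous_const
    simpa using h.tendsto p.1
  have keyv : Filter.Tendsto (fun t : ℝ => (p.1, t)) (nhds p.2) (nhds p) := by
    have h : Continuous (fun t : ℝ => (p.1, t)) := continuous_const.prodMk continuous_id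
    simpa using h.tendsto p.2
  have hGu : ∀ w : ℝ × ℝ, HasDerivAt (fun t => fderiv ℝ σ (t, p.2) w)
      (fderiv ℝ (fderiv ℝ σ) p (1, 0) w) p.1 := fun w => slice_u (hG w)
  have hGv : ∀ w : ℝ × ℝ, HasDerivAt (fun t => fderiv ℝ σ (p.1, t) w)
      (fderiv ℝ (fderiv ℝ σ) p (0, 1) w) p.2 := fun w => slice_v (hG w)
  -- second partials
  have h2uu : fderiv ℝ (fderiv ℝ σ) p (1, 0) (1, 0) = pdu (pdu σ) p := by
    have he : (fun t => pdu σ (t, p.2)) =ᶠ[nhds p.1]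
        (fun t => fderiv ℝ σ (t, p.2) (1, 0)) := keyu.eventually hpu
    rw [pdu, he.deriv_eq, (hGu (1, 0)).deriv]
  have h2vu : fderiv ℝ (fderiv ℝ σ) p (0, 1) (1, 0) = pdv (pdu σ) p := by
    have he : (fun t => pdu σ (p.1, t)) =ᶠ[nhds p.2]
        (fun t => fderiv ℝ σ (p.1, t) (1, 0)) := keyv.eventually hpu
    rw [pdv, he.deriv_eq, (hGv (1, 0)).deriv]
  have h2vv : fderiv ℝ (fderiv ℝ σ) p (0, 1) (0, 1) = pdv (pdv σ) p := by
    have he : (fun t => pdv σ (p.1, t)) =ᶠ[nhds p.2]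
        (fun t => fderiv ℝ σ (p.1, t) (0, 1)) := keyv.eventually hpv
    rw [pdv, he.deriv_eq, (hGv (0, 1)).deriv]
  have hswap : fderiv ℝ (fderiv ℝ σ) p (1, 0) (0, 1) = pdv (pdu σ) p := by
    rw [hsymm (1, 0) (0, 1)]; exact h2vu
  -- first partials of E, F, G
  have hEu : pdu (Ef σ) p = 2 * ⟪pdu (pdu σ) p, pdu σ p⟫ := by
    have he : (fun t => Ef σ (t, p.2)) =ᶠ[nhds p.1]
        (fun t => ⟪fderiv ℝ σ (t, p.2) (1, 0), fderiv ℝ σ (t, p.2) (1, 0)⟫) := by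
      filter_upwards [keyu.eventually hpu] with t ht
      rw [Ef, ht]
    rw [pdu, he.deriv_eq, ((hGu (1, 0)).inner ℝ (hGu (1, 0))).deriv]
    simp only [Prod.mk.eta, hpup, h2uu]
    rw [real_inner_comm (pdu σ p)]; ring
  have hEv : pdv (Ef σ) p = 2 * ⟪pdv (pdu σ) p, pdu σ p⟫ := by
    have he : (fun t => Ef σ (p.1, t)) =ᶠ[nhds p.2]
        (fun t => ⟪fderiv ℝ σ (p.1, t) (1, 0), fderiv ℝ σ (p.1, t) (1, 0)⟫) := by
      filter_upwards [keyv.eventually hpu] with t ht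
      rw [Ef, ht]
    rw [pdv, he.deriv_eq, ((hGv (1, 0)).inner ℝ (hGv (1, 0))).deriv]
    simp only [Prod.mk.eta, hpup, h2vu]
    rw [real_inner_comm (pdu σ p)]; ring
  have hFu : pdu (Ff σ) p = ⟪pdv (pdu σ) p, pdu σ p⟫ + ⟪pdu (pdu σ) p, pdv σ p⟫ := by
    have he : (fun t => Ff σ (t, p.2)) =ᶠ[nhds p.1]
        (fun t => ⟪fderiv ℝ σ (t, p.2) (1, 0), fderiv ℝ σ (t, p.2) (0, 1)⟫) := by
      filter_upwards [keyu.eventually hpu, keyu.eventually hpv] with t ht1 ht2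
      rw [Ff, ht1, ht2]
    rw [pdu, he.deriv_eq, ((hGu (1, 0)).inner ℝ (hGu (0, 1))).deriv]
    simp only [Prod.mk.eta, hpup, hpvp, hswap, h2uu]
    rw [real_inner_comm (pdu σ p)]
  have hFv : pdv (Ff σ) p = ⟪pdv (pdv σ) p, pdu σ p⟫ + ⟪pdv (pdu σ) p, pdv σ p⟫ := by
    have he : (fun t => Ff σ (p.1, t)) =ᶠ[nhds p.2]
        (fun t => ⟪fderiv ℝ σ (p.1, t) (1, 0), fderiv ℝ σ (p.1, t) (0, 1)⟫) := by
      filter_upwards [keyv.eventually hpu, keyv.eventually hpv] with t ht1 ht2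
      rw [Ff, ht1, ht2]
    rw [pdv, he.deriv_eq, ((hGv (1, 0)).inner ℝ (hGv (0, 1))).deriv]
    simp only [Prod.mk.eta, hpup, hpvp, h2vv, h2vu]
    rw [real_inner_comm (pdu σ p)]
  have hGu' : pdu (Gf σ) p = 2 * ⟪pdv (pdu σ) p, pdv σ p⟫ := by
    have he : (fun t => Gf σ (t, p.2)) =ᶠ[nhds p.1]
        (fun t => ⟪fderiv ℝ σ (t, p.2) (0, 1), fderiv ℝ σ (t, p.2) (0, 1)⟫) := by
      filter_upwards [keyu.eventually hpv] with t ht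
      rw [Gf, ht]
    rw [pdu, he.deriv_eq, ((hGu (0, 1)).inner ℝ (hGu (0, 1))).deriv]
    simp only [Prod.mk.eta, hpvp, hswap]
    rw [real_inner_comm (pdv σ p)]; ring
  have hGv' : pdv (Gf σ) p = 2 * ⟪pdv (pdv σ) p, pdv σ p⟫ := by
    have he : (fun t => Gf σ (p.1, t)) =ᶠ[nhds p.2]
        (fun t => ⟪fderiv ℝ σ (p.1, t) (0, 1), fderiv ℝ σ (p.1, t) (0, 1)⟫) := by
      filter_upwards [keyv.eventually hpv] with t ht
      rw [Gf, ht]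
    rw [pdv, he.deriv_eq, ((hGv (0, 1)).inner ℝ (hGv (0, 1))).deriv]
    simp only [Prod.mk.eta, hpvp, h2vv]
    rw [real_inner_comm (pdv σ p)]; ring
  -- scalar expansions
  have hnu' : ⟪n, pdu σ p⟫ = (0 : ℝ) := by rw [real_inner_comm]; exact hnu
  have hnv' : ⟪n, pdv σ p⟫ = (0 : ℝ) := by rw [real_inner_comm]; exact hnv
  have eE : Ef σ p = ⟪pdu σ p, pdu σ p⟫ := rfl
  have eF : Ff σ p = ⟪pdu σ p, pdv σ p⟫ := rfl
  have eG : Gf σ p = ⟪pdv σ p, pdv σ p⟫ := rfl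
  have expand : ∀ (a b c : ℝ), ⟪a • pdu σ p + b • pdv σ p + c • n, pdu σ p⟫
      = a * Ef σ p + b * Ff σ p ∧ ⟪a • pdu σ p + b • pdv σ p + c • n, pdv σ p⟫
      = a * Ff σ p + b * Gf σ p := by
    intro a b c
    refine ⟨?_, ?_⟩
    · rw [inner_add_left, inner_add_left, real_inner_smul_left, real_inner_smul_left,
        real_inner_smul_left, hnu', real_inner_comm (pdu σ p) (pdv σ p), ← eE, ← eF]
      ring
    · rw [inner_add_left, inner_add_left, real_inner_smul_left, real_inner_smul_left,
        real_inner_smul_left, hnv', ← eF, ← eG]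
      ring
  have a1 := huu ▸ (expand Γ111 Γ211 L).1
  have a2 := huu ▸ (expand Γ111 Γ211 L).2
  have b1 := huv ▸ (expand Γ112 Γ212 M).1
  have b2 := huv ▸ (expand Γ112 Γ212 M).2
  have c1 := hvv ▸ (expand Γ122 Γ222 N).1
  have c2 := hvv ▸ (expand Γ122 Γ222 N).2
  ext i j
  fin_cases i <;> fin_cases j <;>
    simp only [Matrix.mul_apply, Fin.sum_univ_two] <;>
    norm_num [Matrix.cons_val_zero, Matrix.cons_val_one, Matrix.head_cons, Matrix.cons_val',
      Matrix.empty_val', Matrix.cons_val_fin_one, Matrix.head_fin_const, Matrix.cons_val_two,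
      Matrix.tail_cons] <;>
    simp only [hEu, hEv, hFu, hFv, hGu', hGv', a1, a2, b1, b2, c1, c2] <;> ring
end
end
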